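/- arXiv:1911.03242 — 2 statements merged into one kernel-verified Lean document; each statement's English description precedes it below -/
import Mathlib

section
/- (Correctness of DT-PKC decryption) Given a ciphertext (C₁, C₂) = (g^{sk·r}(1+mN), g^r) modulo N^2, we have L(C₁ / C₂^{sk} mod N^2) ≡ m (mod N), where L(x) = (x−1)/N. -/
/-- Correctness of DT-PKC decryption: for ciphertext
`(C₁, C₂) = (g^{sk·r}(1+mN), g^r)` mod `N²`, we have
`L(C₁ / C₂^{sk}) ≡ m (mod N)` where `L(x) = (x-1)/N`. -/
theorem dtpkc_decryption_correct (N : ℕ) (hN : 2 ≤ N)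
    (g : (ZMod (N ^ 2))ˣ) (sk r m : ℕ) (hm : m < N) :
    ((((g : ZMod (N ^ 2)) ^ (sk * r) * (1 + (m : ZMod (N ^ 2)) * N)) *
        (((g ^ r) ^ sk)⁻¹ : (ZMod (N ^ 2))ˣ)).val - 1) / N ≡ m [MOD N] := by
  have key : ((g : ZMod (N ^ 2)) ^ (sk * r) * (1 + (m : ZMod (N ^ 2)) * N)) *
      (((g ^ r) ^ sk)⁻¹ : (ZMod (N ^ 2))ˣ) = ((1 + m * N : ℕ) : ZMod (N ^ 2)) := by
    have h1 : ((((g ^ r) ^ sk)⁻¹ : (ZMod (N ^ 2))ˣ) : ZMod (N ^ 2)) =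
        ((((g ^ (sk * r))⁻¹ : (ZMod (N ^ 2))ˣ)) : ZMod (N ^ 2)) := by
      rw [← pow_mul, mul_comm r sk]
    rw [h1]
    have h2 : (g : ZMod (N ^ 2)) ^ (sk * r) = ((g ^ (sk * r) : (ZMod (N ^ 2))ˣ) : ZMod (N ^ 2)) := by
      simp
    rw [h2, mul_comm _ (1 + (m : ZMod (N ^ 2)) * N), mul_assoc, ← Units.val_mul,
      mul_inv_cancel]
    push_cast
    ring
  rw [key]
  have hlt : 1 + m * N < N ^ 2 := by nlinarith
  rw [ZMod.val_cast_of_lt hlt]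
  have : (1 + m * N - 1) / N = m := by
    simp [Nat.mul_div_cancel m (by omega : 0 < N)]
  rw [this]
end

section
/- (Correctness of two-step partial decryption) Given a ciphertext (C₁, C₂) = (g^{(sk₁+sk₂)·r}(1+mN), g^r) mod N^2 encrypted under the combined key sk₁+sk₂, first computing C₁' = C₁ / C₂^{sk₂} gives (g^{sk₁·r}(1+mN), g^r), and then L(C₁' / C₂^{sk₁} mod N^2) ≡ m (mod N). -/
/-- Correctness of two-step partial decryption: for a ciphertext under the combined key
`sk₁ + sk₂`, dividing by `C₂^{sk₂}` gives the ciphertext under `sk₁`, and then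
`L(C₁' / C₂^{sk₁}) ≡ m (mod N)`. -/
theorem dtpkc_partial_decryption_correct (N : ℕ) (hN : 2 ≤ N)
    (g : (ZMod (N ^ 2))ˣ) (sk₁ sk₂ r m : ℕ) (hm : m < N) :
    ((g : ZMod (N ^ 2)) ^ ((sk₁ + sk₂) * r) * (1 + (m : ZMod (N ^ 2)) * N)) *
        (((g ^ r) ^ sk₂)⁻¹ : (ZMod (N ^ 2))ˣ)
      = (g : ZMod (N ^ 2)) ^ (sk₁ * r) * (1 + (m : ZMod (N ^ 2)) * N) ∧
    (((((g : ZMod (N ^ 2)) ^ ((sk₁ + sk₂) * r) * (1 + (m : ZMod (N ^ 2)) * N)) *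
        (((g ^ r) ^ sk₂)⁻¹ : (ZMod (N ^ 2))ˣ) *
        (((g ^ r) ^ sk₁)⁻¹ : (ZMod (N ^ 2))ˣ)).val - 1) / N) ≡ m [MOD N] := by
  have hval : ∀ s : ℕ, ((((g ^ r) ^ s)⁻¹ : (ZMod (N ^ 2))ˣ) : ZMod (N ^ 2)) *
      (g : ZMod (N ^ 2)) ^ (s * r) = 1 := by
    intro s
    have h : (g : ZMod (N ^ 2)) ^ (s * r) = (((g ^ r) ^ s : (ZMod (N ^ 2))ˣ) : ZMod (N ^ 2)) := by
      push_cast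
      rw [← pow_mul, mul_comm]
    rw [h, ← Units.val_mul, inv_mul_cancel, Units.val_one]
  have h1 : ((g : ZMod (N ^ 2)) ^ ((sk₁ + sk₂) * r) * (1 + (m : ZMod (N ^ 2)) * N)) *
        (((g ^ r) ^ sk₂)⁻¹ : (ZMod (N ^ 2))ˣ)
      = (g : ZMod (N ^ 2)) ^ (sk₁ * r) * (1 + (m : ZMod (N ^ 2)) * N) := by
    have := hval sk₂
    rw [add_mul, pow_add]
    calc (g : ZMod (N ^ 2)) ^ (sk₁ * r) * (g : ZMod (N ^ 2)) ^ (sk₂ * r) *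
          (1 + (m : ZMod (N ^ 2)) * N) * (((g ^ r) ^ sk₂)⁻¹ : (ZMod (N ^ 2))ˣ)
        = (g : ZMod (N ^ 2)) ^ (sk₁ * r) * (1 + (m : ZMod (N ^ 2)) * N) *
          ((((g ^ r) ^ sk₂)⁻¹ : (ZMod (N ^ 2))ˣ) * (g : ZMod (N ^ 2)) ^ (sk₂ * r)) := by ring
      _ = _ := by rw [this, mul_one]
  refine ⟨h1, ?_⟩
  have h2 : ((g : ZMod (N ^ 2)) ^ ((sk₁ + sk₂) * r) * (1 + (m : ZMod (N ^ 2)) * N)) *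
        (((g ^ r) ^ sk₂)⁻¹ : (ZMod (N ^ 2))ˣ) *
        (((g ^ r) ^ sk₁)⁻¹ : (ZMod (N ^ 2))ˣ) = (1 + (m : ZMod (N ^ 2)) * N) := by
    rw [h1]
    have := hval sk₁
    calc (g : ZMod (N ^ 2)) ^ (sk₁ * r) * (1 + (m : ZMod (N ^ 2)) * N) *
          (((g ^ r) ^ sk₁)⁻¹ : (ZMod (N ^ 2))ˣ)
        = (1 + (m : ZMod (N ^ 2)) * N) *
          ((((g ^ r) ^ sk₁)⁻¹ : (ZMod (N ^ 2))ˣ) * (g : ZMod (N ^ 2)) ^ (sk₁ * r)) := by ring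
      _ = _ := by rw [this, mul_one]
  rw [h2]
  have hlt : 1 + m * N < N ^ 2 := by nlinarith
  have hcast : (1 + (m : ZMod (N ^ 2)) * N) = ((1 + m * N : ℕ) : ZMod (N ^ 2)) := by push_cast; ring
  rw [hcast, ZMod.val_cast_of_lt hlt]
  have : (1 + m * N - 1) / N = m := by
    simp [Nat.mul_div_cancel m (by omega : 0 < N)]
  rw [this]
end
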